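/- In the system with the partial function head, add is not ground-commutative as joinability: it is not the case that for all x, y : N there exists z : N with add(x, y) →*_N z and add(y, x) →*_N z. -/

import Mathlib

/-!
`head nil` is a stuck term, so `add (head nil) Z` is already a normal form, whereas
`add Z (head nil)` can only reduce to `head nil`; the two never meet.
-/

namespace Stmt14

mutual
  /-- Terms of sort `N` (numbers). -/
  inductive N : Type
    | Z : N
    | suc : N → N
    | add : N → N → N
    | mul : N → N → N
    | head : LN → N
  /-- Terms of sort `LN` (lists of numbers). -/
  inductive LN : Type
    | nil : LN
    | cons : N → LN → LN
end

mutual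
  /-- The one-step rewrite relation `→_N` on `N`. -/
  inductive StepN : N → N → Prop
    | addZ (x : N) : StepN (N.add N.Z x) x
    | addS (x y : N) : StepN (N.add (N.suc x) y) (N.suc (N.add x y))
    | mulZ (x : N) : StepN (N.mul N.Z x) N.Z
    | mulS (x y : N) : StepN (N.mul (N.suc x) y) (N.add y (N.mul x y))
    | headCons (x : N) (xs : LN) : StepN (N.head (LN.cons x xs)) x
    | sucCong {x y : N} : StepN x y → StepN (N.suc x) (N.suc y)
    | addL {x y : N} (z : N) : StepN x y → StepN (N.add x z) (N.add y z)
    | addR {x y : N} (z : N) : StepN x y → StepN (N.add z x) (N.add z y)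
    | mulL {x y : N} (z : N) : StepN x y → StepN (N.mul x z) (N.mul y z)
    | mulR {x y : N} (z : N) : StepN x y → StepN (N.mul z x) (N.mul z y)
    | headCong {xs ys : LN} : StepLN xs ys → StepN (N.head xs) (N.head ys)
  /-- The one-step rewrite relation `→_LN` on `LN`. -/
  inductive StepLN : LN → LN → Prop
    | consL {x y : N} (xs : LN) : StepN x y → StepLN (LN.cons x xs) (LN.cons y xs)
    | consR (x : N) {xs ys : LN} : StepLN xs ys → StepLN (LN.cons x xs) (LN.cons x ys)
end

/-- `→*_N`: the reflexive-transitive closure of `→_N`. -/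
def StepsN : N → N → Prop := Relation.ReflTransGen StepN

theorem not_stepLN_nil (ys : LN) : ¬ StepLN LN.nil ys := nofun

theorem not_stepN_zero (t : N) : ¬ StepN N.Z t := nofun

theorem not_stepN_head_nil (t : N) : ¬ StepN (N.head LN.nil) t
  | .headCong h => not_stepLN_nil _ h

theorem not_stepN_add_head_nil {y : N} (hy : ∀ t, ¬ StepN y t) (t : N) :
    ¬ StepN (N.add (N.head LN.nil) y) t
  | .addL _ h => not_stepN_head_nil _ h
  | .addR _ h => hy _ h

theorem eq_of_stepN_add_zero {y t : N} (hy : ∀ t, ¬ StepN y t) :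
    StepN (N.add N.Z y) t → t = y
  | .addZ _ => rfl
  | .addL _ h => absurd h (not_stepN_zero _)
  | .addR _ h => absurd h (hy _)

theorem stepsN_add_zero_of_normal {y z : N} (hy : ∀ t, ¬ StepN y t)
    (h : StepsN (N.add N.Z y) z) : z = N.add N.Z y ∨ z = y := by
  rcases Relation.ReflTransGen.cases_head h with rfl | ⟨c, hc, hcz⟩
  · exact .inl rfl
  · obtain rfl := eq_of_stepN_add_zero hy hc
    exact .inr ((Relation.reflTransGen_iff_eq hy).1 hcz)

theorem add_not_ground_commutative :
    ¬ ∀ x y : N, ∃ z : N, StepsN (N.add x y) z ∧ StepsN (N.add y x) z := by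
  intro h
  obtain ⟨z, hxy, hyx⟩ := h (N.head LN.nil) N.Z
  obtain rfl : z = N.add (N.head LN.nil) N.Z :=
    (Relation.reflTransGen_iff_eq (not_stepN_add_head_nil not_stepN_zero)).1 hxy
  rcases stepsN_add_zero_of_normal not_stepN_head_nil hyx with h | h <;> cases h

end Stmt14
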